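/- arXiv:2603.00593 — 4 statements merged into one kernel-verified Lean document; each statement's English description precedes it below -/
import Mathlib

section
/- For every finite bipartite graph G=(U,V,E), fp(G) is at most the minimum of the widths of the two neighborhood-inclusion posets: fp(G) ≤ min(width(P_U), width(P_V)), where P_U is the preorder on U given by u ⪯ u' iff N(u) ⊆ N(u'), and width is the maximum size of a set of vertices with pairwise incomparable neighborhoods. -/
open SimpleGraph

/-- A graph contains an induced `2K₂`: four vertices carrying exactly two disjoint edges. -/
def Has2K2 {V : Type*} (G : SimpleGraph V) : Prop :=
  ∃ a b c d : V, G.Adj a b ∧ G.Adj c d ∧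
    a ≠ c ∧ a ≠ d ∧ b ≠ c ∧ b ≠ d ∧
    ¬ G.Adj a c ∧ ¬ G.Adj a d ∧ ¬ G.Adj b c ∧ ¬ G.Adj b d

/-- `f` assigns each edge of `G` one of `k` parts, and each part induces
an induced-`2K₂`-free (Ferrers) graph. -/
def IsFerrersPartition {V : Type*} (G : SimpleGraph V) (k : ℕ)
    (f : G.edgeSet → Fin k) : Prop :=
  ∀ i : Fin k,
    ¬ Has2K2 (SimpleGraph.fromEdgeSet {e | ∃ h : e ∈ G.edgeSet, f ⟨e, h⟩ = i})

/-- The Ferrers partition number. -/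
noncomputable def fp {V : Type*} (G : SimpleGraph V) : ℕ :=
  sInf {k | ∃ f : G.edgeSet → Fin k, IsFerrersPartition G k f}

/-- `M` is an induced matching of `G`. -/
def IsInducedMatching {V : Type*} (G : SimpleGraph V) (M : Set (Sym2 V)) : Prop :=
  M ⊆ G.edgeSet ∧
  ∀ e ∈ M, ∀ f ∈ M, e ≠ f → ∀ u ∈ e, ∀ v ∈ f, u ≠ v ∧ ¬ G.Adj u v

/-- The induced matching number. -/
noncomputable def nuInd {V : Type*} (G : SimpleGraph V) : ℕ :=
  sSup {n | ∃ M : Finset (Sym2 V), IsInducedMatching G ↑M ∧ M.card = n}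

/-- The width of the neighborhood-inclusion poset on the `U`-side: the maximum number of
`U`-vertices with pairwise incomparable neighborhoods. -/
noncomputable def widthU {α β : Type*} (G : SimpleGraph (α ⊕ β)) : ℕ :=
  sSup {k | ∃ S : Finset α, S.card = k ∧ ∀ u ∈ S, ∀ u' ∈ S, u ≠ u' →
    ¬ {w : β | G.Adj (Sum.inl u) (Sum.inr w)} ⊆ {w : β | G.Adj (Sum.inl u') (Sum.inr w)} ∧
    ¬ {w : β | G.Adj (Sum.inl u') (Sum.inr w)} ⊆ {w : β | G.Adj (Sum.inl u) (Sum.inr w)}}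

/-- The width of the neighborhood-inclusion poset on the `V`-side. -/
noncomputable def widthV {α β : Type*} (G : SimpleGraph (α ⊕ β)) : ℕ :=
  sSup {k | ∃ S : Finset β, S.card = k ∧ ∀ v ∈ S, ∀ v' ∈ S, v ≠ v' →
    ¬ {w : α | G.Adj (Sum.inl w) (Sum.inr v)} ⊆ {w : α | G.Adj (Sum.inl w) (Sum.inr v')} ∧
    ¬ {w : α | G.Adj (Sum.inl w) (Sum.inr v')} ⊆ {w : α | G.Adj (Sum.inl w) (Sum.inr v)}}

namespace FpAux

section Dilworth

variable {γ : Type*} (r : γ → γ → Prop)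

/-- `t` is an antichain for `r`. -/
def IsAC (t : Finset γ) : Prop :=
  ∀ x ∈ t, ∀ y ∈ t, x ≠ y → ¬ r x y ∧ ¬ r y x

lemma exists_max_rel (htrans : Transitive r) :
    ∀ s : Finset γ, s.Nonempty → ∃ a ∈ s, ∀ x ∈ s, r a x → r x a := by
  classical
  intro s
  induction s using Finset.induction_on with
  | empty => intro h; simp at h
  | @insert b t hbt ih =>
    intro _
    rcases t.eq_empty_or_nonempty with rfl | htne
    · exact ⟨b, by simp, by intro x hx; simp at hx; subst hx; exact fun h => h⟩
    · obtain ⟨a, hat, hamax⟩ := ih htne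
      by_cases hr : r a b ∧ ¬ r b a
      · refine ⟨b, Finset.mem_insert_self _ _, ?_⟩
        intro x hx hbx
        rcases Finset.mem_insert.1 hx with rfl | hxt
        · exact hbx
        · exact htrans (hamax x hxt (htrans hr.1 hbx)) hr.1
      · refine ⟨a, Finset.mem_insert_of_mem hat, ?_⟩
        intro x hx hax
        rcases Finset.mem_insert.1 hx with rfl | hxt
        · rcases not_and_or.1 hr with h | h
          · exact absurd hax h
          · exact not_not.1 h
        · exact hamax x hxt hax

/-- Dilworth's theorem for a finite set under a transitive reflexive relation: if every
antichain has at most `n` elements, the set can be covered by `n` chains. -/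
theorem dilworth (htrans : Transitive r) (hrefl : Reflexive r) :
    ∀ s : Finset γ, ∀ n : ℕ, (∀ t ⊆ s, IsAC r t → t.card ≤ n) →
      ∃ c : γ → ℕ, (∀ x ∈ s, c x < n) ∧
        (∀ x ∈ s, ∀ y ∈ s, c x = c y → x ≠ y → r x y ∨ r y x) := by
  classical
  intro s
  induction s using Finset.strongInduction with
  | _ s IH =>
  intro n h
  rcases s.eq_empty_or_nonempty with rfl | hne
  · exact ⟨fun _ => 0, by simp, by simp⟩
  obtain ⟨a, haS, hamax⟩ := exists_max_rel r htrans s hne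
  have _inst : Inhabited γ := ⟨a⟩
  set s' := s.erase a with hs'def
  have hs' : s' ⊂ s := Finset.erase_ssubset haS
  have hs'sub : s' ⊆ s := Finset.erase_subset _ _
  set D := {m | ∃ t ⊆ s', IsAC r t ∧ t.card = m} with hDdef
  have hD0 : (0 : ℕ) ∈ D := ⟨∅, Finset.empty_subset _, by intro x hx; simp at hx, rfl⟩
  have hbdd : BddAbove D := ⟨s'.card, by rintro m ⟨t, ht, -, rfl⟩; exact Finset.card_le_card ht⟩
  set d := sSup D with hddef
  obtain ⟨A, hAsub, hAac, hAcard⟩ : d ∈ D := Nat.sSup_mem ⟨0, hD0⟩ hbdd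
  have hle : ∀ t ⊆ s', IsAC r t → t.card ≤ d := fun t ht ha => le_csSup hbdd ⟨t, ht, ha, rfl⟩
  obtain ⟨c', hc'lt, hc'chain⟩ := IH s' hs' d hle
  -- every d-antichain of s' meets every fiber of c'
  have hmeet : ∀ t ⊆ s', IsAC r t → t.card = d → ∀ i < d, ∃ x ∈ t, c' x = i := by
    intro t ht hac hcard i hi
    have hinj : Set.InjOn c' ↑t := by
      intro x hx y hy hxy
      by_contra hne
      rcases hc'chain x (ht hx) y (ht hy) hxy hne with hcmp | hcmp
      · exact (hac x hx y hy hne).1 hcmp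
      · exact (hac x hx y hy hne).2 hcmp
    have himg : t.image c' = Finset.range d := by
      apply Finset.eq_of_subset_of_card_le
      · intro j hj
        obtain ⟨x, hx, rfl⟩ := Finset.mem_image.1 hj
        exact Finset.mem_range.2 (hc'lt x (ht hx))
      · rw [Finset.card_range, Finset.card_image_of_injOn hinj, hcard]
    have : i ∈ t.image c' := himg ▸ Finset.mem_range.2 hi
    obtain ⟨x, hx, hxi⟩ := Finset.mem_image.1 this
    exact ⟨x, hx, hxi⟩
  -- the top element of each fiber among members of d-antichains
  have hT : ∀ i, i < d → ∃ ai, ai ∈ s' ∧ c' ai = i ∧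
      (∃ t ⊆ s', IsAC r t ∧ t.card = d ∧ ai ∈ t) ∧
      ∀ x ∈ s', c' x = i → (∃ t ⊆ s', IsAC r t ∧ t.card = d ∧ x ∈ t) → r x ai := by
    intro i hi
    set T := s'.filter (fun x => c' x = i ∧ ∃ t ⊆ s', IsAC r t ∧ t.card = d ∧ x ∈ t) with hTdef
    have hTne : T.Nonempty := by
      obtain ⟨x, hxA, hxi⟩ := hmeet A hAsub hAac hAcard i hi
      exact ⟨x, Finset.mem_filter.2 ⟨hAsub hxA, hxi, A, hAsub, hAac, hAcard, hxA⟩⟩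
    obtain ⟨ai, haiT, haimax⟩ := exists_max_rel r htrans T hTne
    obtain ⟨hais', haii, haiw⟩ := Finset.mem_filter.1 haiT
    refine ⟨ai, hais', haii, haiw, ?_⟩
    intro x hx hxi hxw
    have hxT : x ∈ T := Finset.mem_filter.2 ⟨hx, hxi, hxw⟩
    by_cases hxe : x = ai
    · exact hxe ▸ hrefl x
    · rcases hc'chain x hx ai hais' (by rw [hxi, haii]) hxe with hcmp | hcmp
      · exact hcmp
      · exact haimax x hxT hcmp
  choose! aF hamem hafib hawit hamax' using hT
  -- the aF's form an antichain
  have hainc : ∀ i < d, ∀ j < d, i ≠ j → ¬ r (aF i) (aF j) := by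
    intro i hi j hj hij hrij
    obtain ⟨t, hts, htac, htcard, hmemj⟩ := hawit j hj
    obtain ⟨x, hxt, hxi⟩ := hmeet t hts htac htcard i hi
    have hxle : r x (aF i) := hamax' i hi x (hts hxt) hxi ⟨t, hts, htac, htcard, hxt⟩
    have hxj : r x (aF j) := htrans hxle hrij
    have hxne : x ≠ aF j := by
      intro hx; apply hij; rw [← hxi, hx, hafib j hj]
    exact (htac x hxt (aF j) hmemj hxne).1 hxj
  have haFinj : ∀ i < d, ∀ j < d, aF i = aF j → i = j := by
    intro i hi j hj hij
    rw [← hafib i hi, hij, hafib j hj]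
  set B := (Finset.range d).image aF with hBdef
  have hBcard : B.card = d := by
    rw [hBdef, Finset.card_image_of_injOn, Finset.card_range]
    intro i hi j hj
    exact haFinj i (Finset.mem_range.1 hi) j (Finset.mem_range.1 hj)
  have hBsub : B ⊆ s' := by
    intro x hx
    obtain ⟨i, hi, rfl⟩ := Finset.mem_image.1 hx
    exact hamem i (Finset.mem_range.1 hi)
  have hBac : IsAC r B := by
    rintro x hx y hy hne
    obtain ⟨i, hi, rfl⟩ := Finset.mem_image.1 hx
    obtain ⟨j, hj, rfl⟩ := Finset.mem_image.1 hy
    rw [Finset.mem_range] at hi hj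
    have hij : i ≠ j := fun hc => hne (by rw [hc])
    exact ⟨hainc i hi j hj hij, hainc j hj i hi (Ne.symm hij)⟩
  have hdn : d ≤ n := by
    have hbn := h B (hBsub.trans hs'sub) hBac
    rwa [hBcard] at hbn
  by_cases hcase : ∀ i < d, ¬ r (aF i) a ∧ ¬ r a (aF i)
  · -- a is incomparable with all aF i : antichain of size d+1
    have hanotB : a ∉ B := by
      intro ha
      exact Finset.notMem_erase a s (hBsub ha)
    have hBa : IsAC r (insert a B) := by
      intro x hx y hy hne
      rcases Finset.mem_insert.1 hx with rfl | hxB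
      · rcases Finset.mem_insert.1 hy with rfl | hyB
        · exact absurd rfl hne
        · obtain ⟨j, hj, rfl⟩ := Finset.mem_image.1 hyB
          rw [Finset.mem_range] at hj
          exact ⟨(hcase j hj).2, (hcase j hj).1⟩
      · rcases Finset.mem_insert.1 hy with rfl | hyB
        · obtain ⟨j, hj, rfl⟩ := Finset.mem_image.1 hxB
          rw [Finset.mem_range] at hj
          exact ⟨(hcase j hj).1, (hcase j hj).2⟩
        · exact hBac x hxB y hyB hne
    have hsn : d + 1 ≤ n := by
      have hsub : insert a B ⊆ s := by
        intro x hx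
        rcases Finset.mem_insert.1 hx with rfl | hxB
        · exact haS
        · exact hs'sub (hBsub hxB)
      have := h (insert a B) hsub hBa
      rwa [Finset.card_insert_of_notMem hanotB, hBcard] at this
    refine ⟨fun x => if x = a then d else c' x, ?_, ?_⟩
    · intro x hxs
      by_cases hxa : x = a
      · simp [hxa]; omega
      · simp only [if_neg hxa]
        have : x ∈ s' := Finset.mem_erase.2 ⟨hxa, hxs⟩
        have := hc'lt x this
        omega
    · intro x hxs y hys hcxy hne
      beta_reduce at hcxy
      by_cases hxa : x = a <;> by_cases hya : y = a
      · exact absurd (hxa.trans hya.symm) hne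
      · exfalso
        rw [if_pos hxa, if_neg hya] at hcxy
        have : y ∈ s' := Finset.mem_erase.2 ⟨hya, hys⟩
        have := hc'lt y this
        omega
      · exfalso
        rw [if_neg hxa, if_pos hya] at hcxy
        have : x ∈ s' := Finset.mem_erase.2 ⟨hxa, hxs⟩
        have := hc'lt x this
        omega
      · rw [if_neg hxa, if_neg hya] at hcxy
        exact hc'chain x (Finset.mem_erase.2 ⟨hxa, hxs⟩) y (Finset.mem_erase.2 ⟨hya, hys⟩) hcxy hne
  · -- some aF i is comparable with a; remove the chain below aF i plus a
    push_neg at hcase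
    obtain ⟨i, hi, hri⟩ := hcase
    have hia : r a (aF i) → r (aF i) a := fun hr1 => hamax (aF i) (hs'sub (hamem i hi)) hr1
    have hia' : r (aF i) a := by
      by_cases hr1 : r (aF i) a
      · exact hr1
      · exact hia (hri hr1)
    set K := insert a (s'.filter (fun x => c' x = i ∧ r x (aF i))) with hKdef
    have haK : a ∈ K := Finset.mem_insert_self _ _
    set s₂ := s \ K with hs₂def
    have hs₂sub : s₂ ⊆ s := Finset.sdiff_subset
    have has₂ : a ∉ s₂ := fun hc => (Finset.mem_sdiff.1 hc).2 haK
    have hs₂ : s₂ ⊂ s := (Finset.ssubset_iff_of_subset hs₂sub).2 ⟨a, haS, has₂⟩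
    have hs₂s' : s₂ ⊆ s' := by
      intro x hx
      obtain ⟨hxs, hxK⟩ := Finset.mem_sdiff.1 hx
      refine Finset.mem_erase.2 ⟨?_, hxs⟩
      intro hxa; exact hxK (hxa ▸ haK)
    have hb2 : ∀ t ⊆ s₂, IsAC r t → t.card ≤ d - 1 := by
      intro t ht hac
      by_contra hgt
      push_neg at hgt
      have htd : t.card = d := by
        have := hle t (ht.trans hs₂s') hac
        omega
      obtain ⟨x, hxt, hxi⟩ := hmeet t (ht.trans hs₂s') hac htd i hi
      have hxle : r x (aF i) := hamax' i hi x (hs₂s' (ht hxt)) hxi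
        ⟨t, ht.trans hs₂s', hac, htd, hxt⟩
      have hxK : x ∈ K := Finset.mem_insert_of_mem
        (Finset.mem_filter.2 ⟨hs₂s' (ht hxt), hxi, hxle⟩)
      exact (Finset.mem_sdiff.1 (ht hxt)).2 hxK
    obtain ⟨c₂, hc₂lt, hc₂chain⟩ := IH s₂ hs₂ (d - 1) hb2
    refine ⟨fun x => if x ∈ s₂ then c₂ x else d - 1, ?_, ?_⟩
    · intro x hxs
      by_cases hx2 : x ∈ s₂
      · have := hc₂lt x hx2
        simp only [if_pos hx2]
        omega
      · simp only [if_neg hx2]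
        omega
    · intro x hxs y hys hcxy hne
      beta_reduce at hcxy
      by_cases hx2 : x ∈ s₂ <;> by_cases hy2 : y ∈ s₂
      · rw [if_pos hx2, if_pos hy2] at hcxy
        exact hc₂chain x hx2 y hy2 hcxy hne
      · exfalso
        rw [if_pos hx2, if_neg hy2] at hcxy
        have := hc₂lt x hx2
        omega
      · exfalso
        rw [if_neg hx2, if_pos hy2] at hcxy
        have := hc₂lt y hy2
        omega
      · -- both in K, which is a chain
        have hxK : x ∈ K := by
          by_contra hc
          exact hx2 (Finset.mem_sdiff.2 ⟨hxs, hc⟩)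
        have hyK : y ∈ K := by
          by_contra hc
          exact hy2 (Finset.mem_sdiff.2 ⟨hys, hc⟩)
        rcases Finset.mem_insert.1 hxK with rfl | hxf
        · rcases Finset.mem_insert.1 hyK with rfl | hyf
          · exact absurd rfl hne
          · obtain ⟨-, -, hyr⟩ := Finset.mem_filter.1 hyf
            exact Or.inr (htrans hyr hia')
        · rcases Finset.mem_insert.1 hyK with rfl | hyf
          · obtain ⟨-, -, hxr⟩ := Finset.mem_filter.1 hxf
            exact Or.inl (htrans hxr hia')
          · obtain ⟨hxs', hxi, -⟩ := Finset.mem_filter.1 hxf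
            obtain ⟨hys', hyi, -⟩ := Finset.mem_filter.1 hyf
            exact hc'chain x hxs' y hys' (by rw [hxi, hyi]) hne

end Dilworth

lemma pair_eq_pair {α β : Type*} {u u' : α} {v v' : β}
    (h : s(Sum.inl u, Sum.inr v) = (s(Sum.inl u', Sum.inr v') : Sym2 (α ⊕ β))) :
    u = u' ∧ v = v' := by
  rw [Sym2.eq_iff] at h
  rcases h with ⟨ha, hb⟩ | ⟨ha, hb⟩
  · exact ⟨Sum.inl.inj ha, Sum.inr.inj hb⟩
  · exact absurd ha (by simp)

lemma no2K2 {α β : Type*} (S : Set (Sym2 (α ⊕ β)))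
    (hS : ∀ e ∈ S, ∃ u v, e = s(Sum.inl u, Sum.inr v))
    (hstar : ∀ u v u' v', s(Sum.inl u, Sum.inr v) ∈ S → s(Sum.inl u', Sum.inr v') ∈ S →
      s(Sum.inl u, Sum.inr v') ∈ S ∨ s(Sum.inl u', Sum.inr v) ∈ S) :
    ¬ Has2K2 (SimpleGraph.fromEdgeSet S) := by
  rintro ⟨a, b, c, d, hab, hcd, hac, had, hbc, hbd, nac, nad, nbc, nbd⟩
  rw [fromEdgeSet_adj] at hab hcd
  obtain ⟨e1S, hne1⟩ := hab
  obtain ⟨e2S, hne2⟩ := hcd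
  obtain ⟨u1, v1, h1⟩ := hS _ e1S
  obtain ⟨u2, v2, h2⟩ := hS _ e2S
  rw [Sym2.eq_iff] at h1 h2
  have hadj : ∀ x y : α ⊕ β, ∀ u : α, ∀ v : β, x = Sum.inl u → y = Sum.inr v →
      s(Sum.inl u, Sum.inr v) ∈ S → (SimpleGraph.fromEdgeSet S).Adj x y := by
    rintro x y u v rfl rfl hm
    exact (fromEdgeSet_adj _).2 ⟨hm, by simp⟩
  have h1S : s(Sum.inl u1, Sum.inr v1) ∈ S := by rwa [Sym2.eq_iff.2 h1] at e1S
  have h2S : s(Sum.inl u2, Sum.inr v2) ∈ S := by rwa [Sym2.eq_iff.2 h2] at e2S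
  rcases hstar u1 v1 u2 v2 h1S h2S with hm | hm
  · rcases h1 with ⟨ha1, hb1⟩ | ⟨ha1, hb1⟩ <;> rcases h2 with ⟨hc2, hd2⟩ | ⟨hc2, hd2⟩
    · exact nad (hadj a d u1 v2 ha1 hd2 hm)
    · exact nac (hadj a c u1 v2 ha1 hc2 hm)
    · exact nbd (hadj b d u1 v2 hb1 hd2 hm)
    · exact nbc (hadj b c u1 v2 hb1 hc2 hm)
  · rcases h1 with ⟨ha1, hb1⟩ | ⟨ha1, hb1⟩ <;> rcases h2 with ⟨hc2, hd2⟩ | ⟨hc2, hd2⟩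
    · exact nbc ((hadj c b u2 v1 hc2 hb1 hm).symm)
    · exact nbd ((hadj d b u2 v1 hd2 hb1 hm).symm)
    · exact nac ((hadj c a u2 v1 hc2 ha1 hm).symm)
    · exact nad ((hadj d a u2 v1 hd2 ha1 hm).symm)

end FpAux

open FpAux in
/-- The Ferrers partition number is at most the minimum of the two Dilworth widths of the
neighborhood-inclusion posets. -/
theorem stmt3 {α β : Type*} [Fintype α] [Fintype β] (G : SimpleGraph (α ⊕ β))
    (h1 : ∀ a a' : α, ¬ G.Adj (Sum.inl a) (Sum.inl a'))
    (h2 : ∀ b b' : β, ¬ G.Adj (Sum.inr b) (Sum.inr b')) :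
    fp G ≤ min (widthU G) (widthV G) := by
  classical
  have hedge : ∀ e ∈ G.edgeSet, ∃ u v,
      e = s(Sum.inl u, Sum.inr v) ∧ G.Adj (Sum.inl u) (Sum.inr v) := by
    intro e he
    induction e using Sym2.ind with
    | _ x y =>
      rw [mem_edgeSet] at he
      match x, y with
      | Sum.inl u, Sum.inl u' => exact absurd he (h1 u u')
      | Sum.inl u, Sum.inr v => exact ⟨u, v, rfl, he⟩
      | Sum.inr v, Sum.inl u => exact ⟨u, v, Sym2.eq_swap, he.symm⟩
      | Sum.inr v, Sum.inr v' => exact absurd he (h2 v v')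
  have hfpU : fp G ≤ widthU G := by
    set NU : α → Set β := fun u => {w : β | G.Adj (Sum.inl u) (Sum.inr w)} with hNUdef
    have hboundU : ∀ t ⊆ (Finset.univ : Finset α),
        IsAC (fun u u' => NU u ⊆ NU u') t → t.card ≤ widthU G := by
      intro t _ hac
      apply le_csSup
      · exact ⟨Fintype.card α, by rintro k ⟨S, rfl, -⟩; exact Finset.card_le_univ S⟩
      · exact ⟨t, rfl, fun u hu u' hu' hne => hac u hu u' hu' hne⟩
    obtain ⟨c, hclt, hchain⟩ := dilworth (fun u u' => NU u ⊆ NU u')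
      (fun _ _ _ hxy hyz => hxy.trans hyz) (fun _ => subset_rfl)
      Finset.univ (widthU G) hboundU
    set f : G.edgeSet → Fin (widthU G) :=
      fun e => ⟨c (hedge e.1 e.2).choose, hclt _ (Finset.mem_univ _)⟩ with hfdef
    have hfval : ∀ (u : α) (v : β) (he : s(Sum.inl u, Sum.inr v) ∈ G.edgeSet),
        (f ⟨_, he⟩ : Fin (widthU G)).1 = c u := by
      intro u v he
      obtain ⟨v', hev', -⟩ := (hedge _ he).choose_spec
      obtain ⟨hu, -⟩ := pair_eq_pair hev'
      show c (hedge _ he).choose = c u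
      rw [← hu]
    apply Nat.sInf_le
    refine ⟨f, ?_⟩
    intro i
    apply no2K2
    · intro e he
      obtain ⟨hE, -⟩ := he
      obtain ⟨u, v, hev, -⟩ := hedge e hE
      exact ⟨u, v, hev⟩
    · intro u v u' v' hm1 hm2
      obtain ⟨he1, hf1⟩ := hm1
      obtain ⟨he2, hf2⟩ := hm2
      have hA1 : G.Adj (Sum.inl u) (Sum.inr v) := (mem_edgeSet G).1 he1
      have hA2 : G.Adj (Sum.inl u') (Sum.inr v') := (mem_edgeSet G).1 he2
      have hc1 : c u = (i : ℕ) := by rw [← hfval u v he1, hf1]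
      have hc2 : c u' = (i : ℕ) := by rw [← hfval u' v' he2, hf2]
      by_cases huu : u = u'
      · exact Or.inr (huu ▸ (⟨he1, hf1⟩ : ∃ h : s(Sum.inl u, Sum.inr v) ∈ G.edgeSet,
          f ⟨_, h⟩ = i))
      · rcases hchain u (Finset.mem_univ u) u' (Finset.mem_univ u')
          (by rw [hc1, hc2]) huu with hsub | hsub
        · have hA : G.Adj (Sum.inl u') (Sum.inr v) := hsub hA1
          have heA : s(Sum.inl u', Sum.inr v) ∈ G.edgeSet := (mem_edgeSet G).2 hA
          exact Or.inr ⟨heA, Fin.ext (by rw [hfval u' v heA, hc2])⟩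
        · have hA : G.Adj (Sum.inl u) (Sum.inr v') := hsub hA2
          have heA : s(Sum.inl u, Sum.inr v') ∈ G.edgeSet := (mem_edgeSet G).2 hA
          exact Or.inl ⟨heA, Fin.ext (by rw [hfval u v' heA, hc1])⟩
  have hfpV : fp G ≤ widthV G := by
    set NV : β → Set α := fun v => {w : α | G.Adj (Sum.inl w) (Sum.inr v)} with hNVdef
    have hboundV : ∀ t ⊆ (Finset.univ : Finset β),
        IsAC (fun v v' => NV v ⊆ NV v') t → t.card ≤ widthV G := by
      intro t _ hac
      apply le_csSup
      · exact ⟨Fintype.card β, by rintro k ⟨S, rfl, -⟩; exact Finset.card_le_univ S⟩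
      · exact ⟨t, rfl, fun v hv v' hv' hne => hac v hv v' hv' hne⟩
    obtain ⟨c, hclt, hchain⟩ := dilworth (fun v v' => NV v ⊆ NV v')
      (fun _ _ _ hxy hyz => hxy.trans hyz) (fun _ => subset_rfl)
      Finset.univ (widthV G) hboundV
    set f : G.edgeSet → Fin (widthV G) :=
      fun e => ⟨c (hedge e.1 e.2).choose_spec.choose, hclt _ (Finset.mem_univ _)⟩ with hfdef
    have hfval : ∀ (u : α) (v : β) (he : s(Sum.inl u, Sum.inr v) ∈ G.edgeSet),
        (f ⟨_, he⟩ : Fin (widthV G)).1 = c v := by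
      intro u v he
      obtain ⟨hev', -⟩ := (hedge _ he).choose_spec.choose_spec
      obtain ⟨-, hv⟩ := pair_eq_pair hev'
      show c (hedge _ he).choose_spec.choose = c v
      rw [← hv]
    apply Nat.sInf_le
    refine ⟨f, ?_⟩
    intro i
    apply no2K2
    · intro e he
      obtain ⟨hE, -⟩ := he
      obtain ⟨u, v, hev, -⟩ := hedge e hE
      exact ⟨u, v, hev⟩
    · intro u v u' v' hm1 hm2
      obtain ⟨he1, hf1⟩ := hm1
      obtain ⟨he2, hf2⟩ := hm2
      have hA1 : G.Adj (Sum.inl u) (Sum.inr v) := (mem_edgeSet G).1 he1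
      have hA2 : G.Adj (Sum.inl u') (Sum.inr v') := (mem_edgeSet G).1 he2
      have hc1 : c v = (i : ℕ) := by rw [← hfval u v he1, hf1]
      have hc2 : c v' = (i : ℕ) := by rw [← hfval u' v' he2, hf2]
      by_cases hvv : v = v'
      · exact Or.inl (hvv ▸ (⟨he1, hf1⟩ : ∃ h : s(Sum.inl u, Sum.inr v) ∈ G.edgeSet,
          f ⟨_, h⟩ = i))
      · rcases hchain v (Finset.mem_univ v) v' (Finset.mem_univ v')
          (by rw [hc1, hc2]) hvv with hsub | hsub
        · have hA : G.Adj (Sum.inl u) (Sum.inr v') := hsub hA1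
          have heA : s(Sum.inl u, Sum.inr v') ∈ G.edgeSet := (mem_edgeSet G).2 hA
          exact Or.inl ⟨heA, Fin.ext (by rw [hfval u v' heA, hc2])⟩
        · have hA : G.Adj (Sum.inl u') (Sum.inr v) := hsub hA2
          have heA : s(Sum.inl u', Sum.inr v) ∈ G.edgeSet := (mem_edgeSet G).2 hA
          exact Or.inr ⟨heA, Fin.ext (by rw [hfval u' v heA, hc1])⟩
  exact le_min hfpU hfpV
end

section
/- For the path P_n on n ≥ 2 vertices, fp(P_n) = ⌈(n−1)/3⌉. -/
open SimpleGraph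

private lemma path_edge_mem {n m : ℕ} (h : m + 1 < n) :
    s((⟨m, by omega⟩ : Fin n), ⟨m+1, h⟩) ∈ (pathGraph n).edgeSet := by
  rw [SimpleGraph.mem_edgeSet, pathGraph_adj]; left; rfl


private lemma window_no2K2 {n w : ℕ} (S : Set (Sym2 (Fin n)))
    (H1 : ∀ e ∈ S, ∃ m : ℕ, ∃ h : m + 1 < n, m / 3 = w ∧
       e = s((⟨m, by omega⟩ : Fin n), ⟨m+1, h⟩))
    (H2 : ∀ m : ℕ, ∀ h : m + 1 < n, m / 3 = w →
       s((⟨m, by omega⟩ : Fin n), ⟨m+1, h⟩) ∈ S) :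
    ¬ Has2K2 (SimpleGraph.fromEdgeSet S) := by
  rintro ⟨a, b, c, d, hab, hcd, hac, had, hbc, hbd, nac, nad, nbc, nbd⟩
  have key : ∀ x y : Fin n, x.val + 1 = y.val → x.val / 3 = w →
      (SimpleGraph.fromEdgeSet S).Adj x y := by
    intro x y hxy hx
    rw [SimpleGraph.fromEdgeSet_adj]
    have hy : y = ⟨x.val + 1, by omega⟩ := Fin.ext hxy.symm
    rw [hy]
    exact ⟨H2 x.val (by omega) hx, by simp [Fin.ext_iff]⟩
  rw [SimpleGraph.fromEdgeSet_adj] at hab hcd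
  obtain ⟨m₁, h₁, hw₁, he₁⟩ := H1 _ hab.1
  obtain ⟨m₂, h₂, hw₂, he₂⟩ := H1 _ hcd.1
  rw [Sym2.eq_iff] at he₁ he₂
  have vac : a.val ≠ c.val := fun h => hac (Fin.ext h)
  have vad : a.val ≠ d.val := fun h => had (Fin.ext h)
  have vbc : b.val ≠ c.val := fun h => hbc (Fin.ext h)
  have vbd : b.val ≠ d.val := fun h => hbd (Fin.ext h)
  rcases he₁ with ⟨ha, hb⟩ | ⟨ha, hb⟩ <;> rcases he₂ with ⟨hc, hd⟩ | ⟨hc, hd⟩ <;>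
  · have va := congrArg Fin.val ha
    have vb := congrArg Fin.val hb
    have vc := congrArg Fin.val hc
    have vd := congrArg Fin.val hd
    simp only [] at va vb vc vd
    rcases (show m₂ = m₁ + 2 ∨ m₁ = m₂ + 2 by omega) with h | h <;>
    first
    | exact nac (key a c (by omega) (by omega))
    | exact nac ((key c a (by omega) (by omega)).symm)
    | exact nad (key a d (by omega) (by omega))
    | exact nad ((key d a (by omega) (by omega)).symm)
    | exact nbc (key b c (by omega) (by omega))
    | exact nbc ((key c b (by omega) (by omega)).symm)
    | exact nbd (key b d (by omega) (by omega))
    | exact nbd ((key d b (by omega) (by omega)).symm)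

private lemma upper (n : ℕ) (hn : 2 ≤ n) :
    ∃ f : (pathGraph n).edgeSet → Fin ((n+1)/3),
      IsFerrersPartition (pathGraph n) ((n+1)/3) f := by
  have hK : 0 < (n+1)/3 := by omega
  refine ⟨fun e => ⟨min (Sym2.lift ⟨fun u v => min u.val v.val,
      fun u v => min_comm _ _⟩ e.val / 3) ((n+1)/3 - 1), by omega⟩, ?_⟩
  intro i
  apply window_no2K2 (w := i.val)
  · rintro e
    induction e using Sym2.ind with
    | _ u v =>
      rintro ⟨he, hf⟩
      rw [SimpleGraph.mem_edgeSet, pathGraph_adj] at he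
      have hfv := congrArg Fin.val hf
      simp only [Sym2.lift_mk] at hfv
      rcases he with h | h
      · refine ⟨u.val, by omega, by omega, ?_⟩
        have hv : v = ⟨u.val + 1, by omega⟩ := Fin.ext h.symm
        exact congrArg (fun x => s(u, x)) hv
      · rw [Sym2.eq_swap]
        refine ⟨v.val, by omega, by omega, ?_⟩
        have hu : u = ⟨v.val + 1, by omega⟩ := Fin.ext h.symm
        exact congrArg (fun x => s(v, x)) hu
  · intro m h hm
    refine ⟨path_edge_mem h, ?_⟩
    apply Fin.ext
    simp only [Sym2.lift_mk]
    omega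

private lemma lower (n k : ℕ) (f : (pathGraph n).edgeSet → Fin k)
    (hf : IsFerrersPartition (pathGraph n) k f) : n - 1 ≤ 3 * k := by
  classical
  set g : Fin (n-1) → Fin k := fun i =>
    f ⟨s(⟨i.val, by omega⟩, ⟨i.val+1, by omega⟩), path_edge_mem (by omega)⟩ with hg
  have hwin : ∀ i j : Fin (n-1), g i = g j → j.val < i.val + 3 := by
    intro i j hij
    by_contra hlt
    push_neg at hlt
    set S : Set (Sym2 (Fin n)) :=
      {e | ∃ h : e ∈ (pathGraph n).edgeSet, f ⟨e, h⟩ = g i} with hS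
    have nadj : ∀ (p q : ℕ) (hp : p < n) (hq : q < n), p + 1 ≠ q → q + 1 ≠ p →
        ¬ (SimpleGraph.fromEdgeSet S).Adj ⟨p, hp⟩ ⟨q, hq⟩ := by
      intro p q hp hq h1 h2 hadj
      rw [SimpleGraph.fromEdgeSet_adj] at hadj
      obtain ⟨hmem, -⟩ := hadj.1
      rw [SimpleGraph.mem_edgeSet, pathGraph_adj] at hmem
      simp only [] at hmem
      omega
    apply hf (g i)
    refine ⟨⟨i.val, by omega⟩, ⟨i.val + 1, by omega⟩, ⟨j.val, by omega⟩, ⟨j.val + 1, by omega⟩,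
      ?_, ?_, ?_, ?_, ?_, ?_, nadj _ _ _ _ (by omega) (by omega),
      nadj _ _ _ _ (by omega) (by omega), nadj _ _ _ _ (by omega) (by omega),
      nadj _ _ _ _ (by omega) (by omega)⟩
    · rw [SimpleGraph.fromEdgeSet_adj]
      exact ⟨⟨path_edge_mem (by omega), rfl⟩, by simp [Fin.ext_iff]⟩
    · rw [SimpleGraph.fromEdgeSet_adj]
      exact ⟨⟨path_edge_mem (by omega), hij.symm⟩, by simp [Fin.ext_iff]⟩
    · exact fun h => by have := congrArg Fin.val h; simp at this; omega
    · exact fun h => by have := congrArg Fin.val h; simp at this; omega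
    · exact fun h => by have := congrArg Fin.val h; simp at this; omega
    · exact fun h => by have := congrArg Fin.val h; simp at this; omega
  have hcard : ∀ p : Fin k, (Finset.univ.filter (fun i => g i = p)).card ≤ 3 := by
    intro p
    by_cases hne : (Finset.univ.filter (fun i => g i = p)).Nonempty
    · obtain ⟨m, hm, hmin⟩ := Finset.exists_min_image _ Fin.val hne
      have hsub : (Finset.univ.filter (fun i => g i = p)).image Fin.val ⊆
          Finset.Icc m.val (m.val + 2) := by
        intro x hx
        simp only [Finset.mem_image, Finset.mem_filter, Finset.mem_univ, true_and] at hx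
        obtain ⟨i, hi, rfl⟩ := hx
        have h1 := hmin i (by simp [hi])
        have h2 := hwin m i (by
          rw [show g m = p from (Finset.mem_filter.mp hm).2, hi])
        simp only [Finset.mem_Icc]
        omega
      have hle := Finset.card_le_card hsub
      rw [Finset.card_image_of_injective _ Fin.val_injective] at hle
      rw [Nat.card_Icc] at hle; omega
    · rw [Finset.not_nonempty_iff_eq_empty] at hne
      simp [hne]
  have hfib := Finset.card_eq_sum_card_fiberwise
    (f := g) (s := Finset.univ) (t := Finset.univ) (fun i _ => Finset.mem_univ (g i))
  have hsum : ∑ p : Fin k, (Finset.univ.filter (fun i => g i = p)).card ≤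
      ∑ _p : Fin k, 3 := Finset.sum_le_sum (fun p _ => hcard p)
  simp only [Finset.card_univ, Fintype.card_fin, Finset.sum_const, smul_eq_mul] at hfib hsum
  omega

/-- For the path on `n ≥ 2` vertices, `fp (P_n) = ⌈(n-1)/3⌉`. -/
theorem stmt5 (n : ℕ) (hn : 2 ≤ n) :
    fp (SimpleGraph.pathGraph n) = (n - 1 + 2) / 3 := by
  have hK : (n - 1 + 2) / 3 = (n + 1) / 3 := by omega
  rw [hK]
  obtain ⟨f, hf⟩ := upper n hn
  have hmem : (n + 1) / 3 ∈ {k | ∃ f : (pathGraph n).edgeSet → Fin k,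
      IsFerrersPartition (pathGraph n) k f} := by
    rw [Set.mem_setOf_eq]
    exact ⟨f, hf⟩
  apply le_antisymm
  · exact Nat.sInf_le hmem
  · apply le_csInf ⟨_, hmem⟩
    intro k hk
    rw [Set.mem_setOf_eq] at hk
    obtain ⟨g, hg⟩ := hk
    have := lower n k g hg
    omega
end

section
/- Let F_t be the disjoint union of t vertex-disjoint copies of the cycle C_8. Then fp(F_t) − ν_ind(F_t) = t; in particular, the gap between the Ferrers partition number and the induced matching number can be arbitrarily large. -/
open SimpleGraph

/-- The disjoint union of `t` copies of the cycle `C₈`. -/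
def Ft (t : ℕ) : SimpleGraph (Fin t × Fin 8) where
  Adj x y := x.1 = y.1 ∧ (SimpleGraph.cycleGraph 8).Adj x.2 y.2
  symm := ⟨by rintro x y ⟨h1, h2⟩; exact ⟨h1.symm, h2.symm⟩⟩
  loopless := ⟨by rintro x ⟨h1, h2⟩; exact h2.ne rfl⟩

/-!
Both parameters are additive over disjoint copies of a graph. An induced matching or a Ferrers
partition of the copies restricts to each copy, and two edges lying in different copies always
span an induced `2K₂`, so different copies share no part of a Ferrers partition; conversely,
such objects for a single copy can be placed side by side. It remains to see `fp C₈ = 3` and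
`ν_ind C₈ = 2`. Indexing the edges of `C₈` by `Fin 8`, a set of edges spanning no induced `2K₂` is
a path of at most three edges, so the eight edges need three parts, and the paths `0123`, `3456`,
`670` suffice; two edges of an induced matching are at cyclic distance at least three, so there
are at most two of them, and `01`, `45` is one.
-/

open Finset

variable {V W ι : Type*}

-- `Has2K2 G` unfolds to `∃ a b c d, G.Adj a b ∧ G.Adj c d ∧ SeparatedEdges G a b c d`.
def SeparatedEdges (G : SimpleGraph V) (a b c d : V) : Prop :=
  a ≠ c ∧ a ≠ d ∧ b ≠ c ∧ b ≠ d ∧ ¬G.Adj a c ∧ ¬G.Adj a d ∧ ¬G.Adj b c ∧ ¬G.Adj b d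

instance {G : SimpleGraph V} [DecidableEq V] [DecidableRel G.Adj] {a b c d : V} :
    Decidable (SeparatedEdges G a b c d) := by
  unfold SeparatedEdges; infer_instance

instance {G : SimpleGraph V} [Fintype V] [DecidableEq V] [DecidableRel G.Adj] :
    Decidable (Has2K2 G) := by
  unfold Has2K2; infer_instance

section Ferrers

variable {G : SimpleGraph V} {H : SimpleGraph W} {k : ℕ}

def partGraph (G : SimpleGraph V) (f : G.edgeSet → Fin k) (i : Fin k) : SimpleGraph V :=
  fromEdgeSet {e | ∃ h : e ∈ G.edgeSet, f ⟨e, h⟩ = i}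

lemma isFerrersPartition_iff {f : G.edgeSet → Fin k} :
    IsFerrersPartition G k f ↔ ∀ i, ¬Has2K2 (partGraph G f i) := Iff.rfl

lemma partGraph_adj {f : G.edgeSet → Fin k} {i : Fin k} {a b : V} :
    (partGraph G f i).Adj a b ↔ ∃ h : G.Adj a b, f ⟨s(a, b), h⟩ = i := by
  simp only [partGraph, fromEdgeSet_adj, Set.mem_ofPred_eq, mem_edgeSet]
  exact ⟨fun ⟨h, _⟩ => h, fun h => ⟨h, h.1.ne⟩⟩

lemma Has2K2.map (φ : G ↪g H) : Has2K2 G → Has2K2 H := by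
  rintro ⟨a, b, c, d, h⟩
  exact ⟨φ a, φ b, φ c, φ d, by simpa only [φ.map_adj_iff, φ.injective.ne_iff] using h⟩

lemma isFerrersPartition_of_injective {f : G.edgeSet → Fin k} (hf : Function.Injective f) :
    IsFerrersPartition G k f := by
  rintro i ⟨a, b, c, d, hab, hcd, hac, had, -⟩
  obtain ⟨_, hi₁⟩ := partGraph_adj.1 hab
  obtain ⟨_, hi₂⟩ := partGraph_adj.1 hcd
  have := congrArg Subtype.val (hf (hi₁.trans hi₂.symm))
  simp only [Sym2.eq_iff] at this
  grind

lemma exists_isFerrersPartition [Finite G.edgeSet] : ∃ k f, IsFerrersPartition G k f :=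
  ⟨_, _, isFerrersPartition_of_injective (Finite.equivFin G.edgeSet).injective⟩

lemma fp_le {f : G.edgeSet → Fin k} (hf : IsFerrersPartition G k f) : fp G ≤ k :=
  Nat.sInf_le ⟨f, hf⟩

lemma le_fp [Finite G.edgeSet] {n : ℕ} (h : ∀ k f, IsFerrersPartition G k f → n ≤ k) :
    n ≤ fp G := by
  obtain ⟨k, f, hf⟩ := exists_isFerrersPartition (G := G)
  refine le_csInf ⟨k, f, hf⟩ ?_
  rintro k ⟨f, hf⟩
  exact h k f hf

lemma exists_isFerrersPartition_fp [Finite G.edgeSet] : ∃ f, IsFerrersPartition G (fp G) f := by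
  obtain ⟨k, f, hf⟩ := exists_isFerrersPartition (G := G)
  exact Nat.sInf_mem (s := {k | ∃ f : G.edgeSet → Fin k, IsFerrersPartition G k f}) ⟨k, f, hf⟩

lemma IsFerrersPartition.fp_le_card {f : G.edgeSet → Fin k} (hf : IsFerrersPartition G k f)
    {S : Finset (Fin k)} (hS : ∀ e, f e ∈ S) : fp G ≤ S.card := by
  refine fp_le (f := fun e => S.equivFin ⟨f e, hS e⟩) fun i => ?_
  convert hf (S.equivFin.symm i) using 3
  ext e
  simp only [Set.mem_ofPred_eq, ← Equiv.eq_symm_apply, Subtype.ext_iff]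

def partGraphEmbedding (φ : G ↪g H) (f : H.edgeSet → Fin k) (i : Fin k) :
    partGraph G (f ∘ φ.mapEdgeSet) i ↪g partGraph H f i where
  toEmbedding := φ.toEmbedding
  map_rel_iff' := by
    intro a b
    simp only [partGraph_adj, Function.comp_apply]
    exact ⟨fun ⟨h, hi⟩ => ⟨φ.map_adj_iff.1 h, hi⟩, fun ⟨h, hi⟩ => ⟨φ.map_adj_iff.2 h, hi⟩⟩

lemma IsFerrersPartition.comap (φ : G ↪g H) {f : H.edgeSet → Fin k}
    (hf : IsFerrersPartition H k f) : IsFerrersPartition G k (f ∘ φ.mapEdgeSet) :=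
  fun i h => hf i (h.map (partGraphEmbedding φ f i))

end Ferrers

section Copies

variable {G : SimpleGraph V}

def disjointCopies (ι : Type*) (G : SimpleGraph V) : SimpleGraph (ι × V) where
  Adj x y := x.1 = y.1 ∧ G.Adj x.2 y.2
  symm := ⟨by rintro x y ⟨h1, h2⟩; exact ⟨h1.symm, h2.symm⟩⟩
  loopless := ⟨by rintro x ⟨h1, h2⟩; exact h2.ne rfl⟩

@[simp]
lemma disjointCopies_adj {x y : ι × V} :
    (disjointCopies ι G).Adj x y ↔ x.1 = y.1 ∧ G.Adj x.2 y.2 := Iff.rfl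

def copyEmbedding (i : ι) : G ↪g disjointCopies ι G where
  toFun := Prod.mk i
  inj' := Prod.mk_right_injective i
  map_rel_iff' := by simp

lemma injective_sym2Map_prodMk :
    Function.Injective fun p : ι × Sym2 V => p.2.map (Prod.mk p.1) := by
  rintro ⟨i, e⟩ ⟨j, e'⟩ h
  simp only at h
  induction e using Sym2.ind with | _ a b =>
  have hj : (i, a) ∈ e'.map (Prod.mk j) := h ▸ Sym2.mem_map.2 ⟨a, Sym2.mem_mk_left a b, rfl⟩
  obtain ⟨c, -, hc⟩ := Sym2.mem_map.1 hj
  obtain rfl : j = i := congrArg Prod.fst hc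
  exact Prod.ext rfl (Sym2.map.injective (Prod.mk_right_injective _) h)

lemma exists_sym2Map_prodMk_eq {e : Sym2 (ι × V)} (he : e ∈ (disjointCopies ι G).edgeSet) :
    ∃ i, ∃ e' ∈ G.edgeSet, e'.map (Prod.mk i) = e := by
  induction e using Sym2.ind with | _ x y =>
  obtain ⟨i, a⟩ := x
  obtain ⟨j, b⟩ := y
  obtain ⟨rfl, hab⟩ : i = j ∧ G.Adj a b := he
  exact ⟨i, s(a, b), hab, rfl⟩

noncomputable def copyEdgeEquiv : ι × G.edgeSet ≃ (disjointCopies ι G).edgeSet :=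
  Equiv.ofBijective (fun p => (copyEmbedding p.1).mapEdgeSet p.2) <| by
    refine ⟨fun ⟨i, e, he⟩ ⟨j, e', he'⟩ h => ?_, fun e => ?_⟩
    · obtain ⟨rfl, rfl⟩ := Prod.mk.inj
        (injective_sym2Map_prodMk (a₁ := (i, e)) (a₂ := (j, e')) (congrArg Subtype.val h))
      rfl
    · obtain ⟨i, e', he', h⟩ := exists_sym2Map_prodMk_eq e.2
      exact ⟨(i, ⟨e', he'⟩), Subtype.ext h⟩

end Copies

section FerrersCopies

variable {G : SimpleGraph V} {k : ℕ}

lemma copyEdgeEquiv_symm_mk {i : ι} {a b : V} (h : G.Adj a b) :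
    (copyEdgeEquiv (ι := ι)).symm ⟨s((i, a), (i, b)), ⟨rfl, h⟩⟩ = (i, ⟨s(a, b), h⟩) :=
  copyEdgeEquiv.symm_apply_eq.2 rfl

lemma IsFerrersPartition.apply_copyEdgeEquiv_ne {f : (disjointCopies ι G).edgeSet → Fin k}
    (hf : IsFerrersPartition _ k f) {i j : ι} (hij : i ≠ j) (e e' : G.edgeSet) :
    f (copyEdgeEquiv (i, e)) ≠ f (copyEdgeEquiv (j, e')) := by
  obtain ⟨e, he⟩ := e
  obtain ⟨e', he'⟩ := e'
  induction e using Sym2.ind with | _ a b =>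
  induction e' using Sym2.ind with | _ c d =>
  intro hcol
  refine hf _ ⟨(i, a), (i, b), (j, c), (j, d), partGraph_adj.2 ⟨⟨rfl, he⟩, rfl⟩,
    partGraph_adj.2 ⟨⟨rfl, he'⟩, hcol.symm⟩, ?_⟩
  simp [hij]

lemma IsFerrersPartition.card_mul_fp_le [Fintype ι] {f : (disjointCopies ι G).edgeSet → Fin k}
    (hf : IsFerrersPartition _ k f) : Fintype.card ι * fp G ≤ k := by
  classical
  let S : ι → Finset (Fin k) := fun i => univ.filter fun c => ∃ e, f (copyEdgeEquiv (i, e)) = c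
  have hS : ∀ i, fp G ≤ (S i).card := fun i =>
    (hf.comap (copyEmbedding i)).fp_le_card fun e => mem_filter.2 ⟨mem_univ _, e, rfl⟩
  have hdisj : ((univ : Finset ι) : Set ι).PairwiseDisjoint S := by
    intro i _ j _ hij
    simp only [Function.onFun, S, disjoint_filter]
    rintro c - ⟨e, rfl⟩ ⟨e', he'⟩
    exact hf.apply_copyEdgeEquiv_ne hij e e' he'.symm
  calc Fintype.card ι * fp G = ∑ _i : ι, fp G := by simp
    _ ≤ ∑ i, (S i).card := sum_le_sum fun i _ => hS i
    _ = (univ.biUnion S).card := (card_biUnion hdisj).symm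
    _ ≤ k := (card_le_univ _).trans_eq (Fintype.card_fin k)

variable [Fintype ι]

noncomputable def copiesPartition (g : G.edgeSet → Fin k) :
    (disjointCopies ι G).edgeSet → Fin (Fintype.card ι * k) :=
  fun e => finProdFinEquiv (Prod.map (Fintype.equivFin ι) g (copyEdgeEquiv.symm e))

lemma partGraph_copiesPartition_adj {g : G.edgeSet → Fin k} {i j : ι} {a b : V}
    {c : Fin (Fintype.card ι * k)} :
    (partGraph _ (copiesPartition g) c).Adj (i, a) (j, b) ↔
      i = j ∧ ∃ h : G.Adj a b, finProdFinEquiv (Fintype.equivFin ι i, g ⟨s(a, b), h⟩) = c := by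
  rw [partGraph_adj]
  constructor
  · rintro ⟨⟨hij, h⟩, hc⟩
    obtain rfl : i = j := hij
    exact ⟨rfl, h, by rwa [copiesPartition, copyEdgeEquiv_symm_mk] at hc⟩
  · rintro ⟨rfl, h, hc⟩
    exact ⟨⟨rfl, h⟩, by rwa [copiesPartition, copyEdgeEquiv_symm_mk]⟩

lemma isFerrersPartition_copiesPartition {g : G.edgeSet → Fin k} (hg : IsFerrersPartition G k g) :
    IsFerrersPartition (disjointCopies ι G) _ (copiesPartition g) := by
  rintro c ⟨⟨i, a⟩, ⟨i', b⟩, ⟨j, c'⟩, ⟨j', d⟩, hab, hcd, hac, had, hbc, hbd, nac, nad, nbc, nbd⟩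
  obtain ⟨rfl, hadj₁, rfl⟩ := partGraph_copiesPartition_adj.1 hab
  obtain ⟨rfl, hadj₂, hc⟩ := partGraph_copiesPartition_adj.1 hcd
  obtain ⟨hji, hp⟩ := Prod.mk.inj (finProdFinEquiv.injective hc)
  obtain rfl : i = j := ((Fintype.equivFin ι).injective hji).symm
  have lift : ∀ x y, (partGraph G g (g ⟨s(a, b), hadj₁⟩)).Adj x y →
      (partGraph _ (copiesPartition g) _).Adj (i, x) (i, y) := fun x y h => by
    obtain ⟨h, hxy⟩ := partGraph_adj.1 h
    exact partGraph_copiesPartition_adj.2 ⟨rfl, h, by rw [hxy]⟩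
  have ne : ∀ x y : V, (i, x) ≠ (i, y) → x ≠ y := fun x y => mt (congrArg (Prod.mk i))
  exact hg _ ⟨a, b, c', d, partGraph_adj.2 ⟨hadj₁, rfl⟩, partGraph_adj.2 ⟨hadj₂, hp⟩,
    ne _ _ hac, ne _ _ had, ne _ _ hbc, ne _ _ hbd,
    mt (lift _ _) nac, mt (lift _ _) nad, mt (lift _ _) nbc, mt (lift _ _) nbd⟩

variable [Finite V]

theorem fp_disjointCopies : fp (disjointCopies ι G) = Fintype.card ι * fp G := by
  obtain ⟨g, hg⟩ := exists_isFerrersPartition_fp (G := G)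
  exact (fp_le (isFerrersPartition_copiesPartition hg)).antisymm
    (le_fp fun _ _ hf => hf.card_mul_fp_le)

end FerrersCopies

section InducedMatching

variable {G : SimpleGraph V} {H : SimpleGraph W}

lemma nuInd_le {n : ℕ} (h : ∀ M : Finset (Sym2 V), IsInducedMatching G M → M.card ≤ n) :
    nuInd G ≤ n :=
  csSup_le' fun _ ⟨M, hM, hn⟩ => hn ▸ h M hM

lemma IsInducedMatching.comap (φ : G ↪g H) {M : Set (Sym2 W)} (hM : IsInducedMatching H M) :
    IsInducedMatching G (Sym2.map φ ⁻¹' M) := by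
  refine ⟨fun e he => φ.map_mem_edgeSet_iff.1 (hM.1 he), fun e he e' he' hne u hu v hv => ?_⟩
  have := hM.2 _ he _ he' ((Sym2.map.injective φ.injective).ne hne)
    _ (Sym2.mem_map.2 ⟨u, hu, rfl⟩) _ (Sym2.mem_map.2 ⟨v, hv, rfl⟩)
  simpa only [φ.injective.ne_iff, φ.map_adj_iff] using this

lemma IsInducedMatching.separatedEdges {M : Set (Sym2 V)} (hM : IsInducedMatching G M)
    {a b c d : V} (hab : s(a, b) ∈ M) (hcd : s(c, d) ∈ M) (hne : s(a, b) ≠ s(c, d)) :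
    SeparatedEdges G a b c d := by
  have h := hM.2 _ hab _ hcd hne
  obtain ⟨hac, nac⟩ := h a (Sym2.mem_mk_left a b) c (Sym2.mem_mk_left c d)
  obtain ⟨had, nad⟩ := h a (Sym2.mem_mk_left a b) d (Sym2.mem_mk_right c d)
  obtain ⟨hbc, nbc⟩ := h b (Sym2.mem_mk_right a b) c (Sym2.mem_mk_left c d)
  obtain ⟨hbd, nbd⟩ := h b (Sym2.mem_mk_right a b) d (Sym2.mem_mk_right c d)
  exact ⟨hac, had, hbc, hbd, nac, nad, nbc, nbd⟩

variable [Finite V]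

lemma bddAbove_card_isInducedMatching :
    BddAbove {n | ∃ M : Finset (Sym2 V), IsInducedMatching G M ∧ M.card = n} := by
  have := Fintype.ofFinite V
  refine ⟨Fintype.card (Sym2 V), ?_⟩
  rintro _ ⟨M, -, rfl⟩
  exact card_le_univ M

lemma IsInducedMatching.card_le_nuInd {M : Finset (Sym2 V)} (hM : IsInducedMatching G M) :
    M.card ≤ nuInd G :=
  le_csSup bddAbove_card_isInducedMatching ⟨M, hM, rfl⟩

lemma exists_isInducedMatching_card_eq_nuInd :
    ∃ M : Finset (Sym2 V), IsInducedMatching G M ∧ M.card = nuInd G :=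
  Nat.sSup_mem (s := {n | ∃ M : Finset (Sym2 V), IsInducedMatching G M ∧ M.card = n})
    ⟨0, ∅, by simp [IsInducedMatching], rfl⟩ bddAbove_card_isInducedMatching

end InducedMatching

section InducedMatchingCopies

variable {G : SimpleGraph V} [Fintype ι]

variable (ι) in
def copiesMatching (M : Finset (Sym2 V)) : Finset (Sym2 (ι × V)) :=
  (univ ×ˢ M).map ⟨fun p => p.2.map (Prod.mk p.1), injective_sym2Map_prodMk⟩

lemma card_copiesMatching (M : Finset (Sym2 V)) :
    (copiesMatching ι M).card = Fintype.card ι * M.card := by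
  simp [copiesMatching]

lemma isInducedMatching_copiesMatching {M : Finset (Sym2 V)} (hM : IsInducedMatching G M) :
    IsInducedMatching (disjointCopies ι G) (copiesMatching ι M) := by
  simp only [copiesMatching, coe_map]
  refine ⟨?_, ?_⟩
  · rintro _ ⟨⟨i, e⟩, hp, rfl⟩
    exact (copyEmbedding i).map_mem_edgeSet_iff.2 (hM.1 (mem_product.1 hp).2)
  · rintro _ ⟨⟨i, e⟩, hp, rfl⟩ _ ⟨⟨j, e'⟩, hp', rfl⟩ hne u hu v hv
    obtain ⟨a, ha, rfl⟩ := Sym2.mem_map.1 hu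
    obtain ⟨b, hb, rfl⟩ := Sym2.mem_map.1 hv
    by_cases hij : i = j
    · subst hij
      have hee' : e ≠ e' := fun h => hne (h ▸ rfl)
      obtain ⟨hab, hadj⟩ :=
        hM.2 e (mem_product.1 hp).2 e' (mem_product.1 hp').2 hee' a ha b hb
      simp [hab, hadj]
    · simp [hij]

variable [Finite V]

lemma IsInducedMatching.card_le_card_mul_nuInd {M : Finset (Sym2 (ι × V))}
    (hM : IsInducedMatching (disjointCopies ι G) M) : M.card ≤ Fintype.card ι * nuInd G := by
  classical
  let Mi : ι → Finset (Sym2 V) := fun i =>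
    M.preimage (Sym2.map (Prod.mk i)) (Sym2.map.injective (Prod.mk_right_injective i)).injOn
  have hMi : ∀ i, IsInducedMatching G (Mi i) := fun i => by
    rw [coe_preimage]
    exact hM.comap (copyEmbedding i)
  have hcover : M ⊆ univ.biUnion fun i => (Mi i).image (Sym2.map (Prod.mk i)) := by
    intro e he
    obtain ⟨i, e', -, rfl⟩ := exists_sym2Map_prodMk_eq (hM.1 he)
    exact mem_biUnion.2 ⟨i, mem_univ _, mem_image_of_mem _ (mem_preimage.2 he)⟩
  calc M.card ≤ ∑ i, ((Mi i).image (Sym2.map (Prod.mk i))).card :=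
        (card_le_card hcover).trans card_biUnion_le
    _ ≤ ∑ _i : ι, nuInd G := sum_le_sum fun i _ => card_image_le.trans (hMi i).card_le_nuInd
    _ = Fintype.card ι * nuInd G := by simp

theorem nuInd_disjointCopies : nuInd (disjointCopies ι G) = Fintype.card ι * nuInd G := by
  obtain ⟨M, hM, hcard⟩ := exists_isInducedMatching_card_eq_nuInd (G := G)
  refine (nuInd_le fun _ h => h.card_le_card_mul_nuInd).antisymm ?_
  rw [← hcard, ← card_copiesMatching]
  exact (isInducedMatching_copiesMatching hM).card_le_nuInd

end InducedMatchingCopies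

section CycleEight

def cycleSubgraph {n : ℕ} (A : Finset (Fin (n + 2))) : SimpleGraph (Fin (n + 2)) where
  Adj a b := (b = a + 1 ∧ a ∈ A) ∨ (a = b + 1 ∧ b ∈ A)
  symm := ⟨fun _ _ => Or.symm⟩
  loopless := ⟨fun a h => by rcases h with ⟨h, -⟩ | ⟨h, -⟩ <;> simp at h⟩

instance {n : ℕ} (A : Finset (Fin (n + 2))) : DecidableRel (cycleSubgraph A).Adj :=
  fun a b => inferInstanceAs (Decidable ((b = a + 1 ∧ a ∈ A) ∨ (a = b + 1 ∧ b ∈ A)))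

set_option maxRecDepth 10000 in
lemma card_le_three_of_forall_not_separatedEdges : ∀ A : Finset (Fin 8),
    (∀ j ∈ A, ∀ j' ∈ A, ¬SeparatedEdges (cycleSubgraph A) j (j + 1) j' (j' + 1)) → A.card ≤ 3 := by
  decide

set_option maxRecDepth 10000 in
lemma card_le_two_of_pairwise_separatedEdges : ∀ J : Finset (Fin 8),
    (∀ j ∈ J, ∀ j' ∈ J, j ≠ j' → SeparatedEdges (cycleGraph 8) j (j + 1) j' (j' + 1)) →
      J.card ≤ 2 := by
  decide

variable {k : ℕ}

lemma cycleGraph_adj_add_one {n : ℕ} (j : Fin (n + 2)) : (cycleGraph (n + 2)).Adj j (j + 1) :=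
  cycleGraph_adj.2 (Or.inr (add_sub_cancel_left j 1))

def cycleEdge {n : ℕ} (j : Fin (n + 2)) : (cycleGraph (n + 2)).edgeSet :=
  ⟨s(j, j + 1), cycleGraph_adj_add_one j⟩

lemma cycleEdge_surjective {n : ℕ} : Function.Surjective (cycleEdge (n := n)) := by
  rintro ⟨e, he⟩
  induction e using Sym2.ind with | _ a b =>
  rcases cycleGraph_adj.1 (show (cycleGraph (n + 2)).Adj a b from he) with h | h
  · obtain rfl := sub_eq_iff_eq_add'.1 h
    exact ⟨b, Subtype.ext Sym2.eq_swap⟩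
  · obtain rfl := sub_eq_iff_eq_add'.1 h
    exact ⟨a, rfl⟩

lemma partGraph_cycleGraph {n : ℕ} (g : (cycleGraph (n + 2)).edgeSet → Fin k) (p : Fin k) :
    partGraph _ g p = cycleSubgraph (univ.filter fun j => g (cycleEdge j) = p) := by
  ext a b
  rw [partGraph_adj]
  constructor
  · rintro ⟨h, rfl⟩
    rcases cycleGraph_adj.1 h with h' | h'
    · obtain rfl := sub_eq_iff_eq_add'.1 h'
      exact Or.inr ⟨rfl, mem_filter.2 ⟨mem_univ _, congrArg g (Subtype.ext Sym2.eq_swap)⟩⟩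
    · obtain rfl := sub_eq_iff_eq_add'.1 h'
      exact Or.inl ⟨rfl, mem_filter.2 ⟨mem_univ _, rfl⟩⟩
  · rintro (⟨rfl, ha⟩ | ⟨rfl, hb⟩)
    · exact ⟨cycleGraph_adj_add_one a, (mem_filter.1 ha).2⟩
    · exact ⟨(cycleGraph_adj_add_one b).symm,
        (congrArg g (Subtype.ext Sym2.eq_swap)).trans (mem_filter.1 hb).2⟩

lemma IsFerrersPartition.three_le {g : (cycleGraph 8).edgeSet → Fin k}
    (hg : IsFerrersPartition _ k g) : 3 ≤ k := by
  let A : Fin k → Finset (Fin 8) := fun p => univ.filter fun j => g (cycleEdge j) = p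
  have hA : ∀ p, (A p).card ≤ 3 := fun p =>
    card_le_three_of_forall_not_separatedEdges (A p) fun j hj j' hj' hsep =>
      isFerrersPartition_iff.1 hg p <| by
        rw [partGraph_cycleGraph]
        exact ⟨j, j + 1, j', j' + 1, Or.inl ⟨rfl, hj⟩, Or.inl ⟨rfl, hj'⟩, hsep⟩
  have h8 : 8 ≤ 3 * k := calc
    8 = (univ : Finset (Fin 8)).card := rfl
    _ = ∑ p, (A p).card := card_eq_sum_card_fiberwise fun _ _ => mem_univ _
    _ ≤ ∑ _p : Fin k, 3 := sum_le_sum fun p _ => hA p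
    _ = 3 * k := by simp [mul_comm]
  omega

noncomputable def cycleEdgeEquiv : Fin 8 ≃ (cycleGraph 8).edgeSet :=
  Equiv.ofBijective cycleEdge ⟨by decide, cycleEdge_surjective⟩

noncomputable def cycleEightPartition (e : (cycleGraph 8).edgeSet) : Fin 3 :=
  ⟨(cycleEdgeEquiv.symm e).val / 3, by omega⟩

lemma isFerrersPartition_cycleEightPartition :
    IsFerrersPartition (cycleGraph 8) 3 cycleEightPartition := by
  have h : ∀ j, cycleEightPartition (cycleEdge j) = ⟨j.val / 3, by omega⟩ := fun j =>
    Fin.ext (congrArg (fun i : Fin 8 => i.val / 3) (cycleEdgeEquiv.symm_apply_apply j))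
  simp only [isFerrersPartition_iff, partGraph_cycleGraph, h]
  decide

theorem fp_cycleGraph_eight : fp (cycleGraph 8) = 3 :=
  (fp_le isFerrersPartition_cycleEightPartition).antisymm
    (le_fp fun _ _ hf => hf.three_le)

theorem nuInd_cycleGraph_eight : nuInd (cycleGraph 8) = 2 := by
  refine (nuInd_le fun M hM => ?_).antisymm ?_
  · let J := univ.filter fun j : Fin 8 => (cycleEdge j).val ∈ M
    have hMJ : M ⊆ J.image fun j => (cycleEdge j).val := by
      intro e he
      obtain ⟨j, hj⟩ := cycleEdge_surjective ⟨e, hM.1 he⟩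
      exact mem_image.2 ⟨j, mem_filter.2 ⟨mem_univ _, by rwa [hj]⟩, by rw [hj]⟩
    refine (card_le_card hMJ).trans (card_image_le.trans ?_)
    refine card_le_two_of_pairwise_separatedEdges J fun j hj j' hj' hne => ?_
    exact hM.separatedEdges (mem_filter.1 hj).2 (mem_filter.1 hj').2
      (fun h => hne (cycleEdgeEquiv.injective (Subtype.ext h)))
  · have hM : IsInducedMatching (cycleGraph 8) ↑({s(0, 1), s(4, 5)} : Finset (Sym2 (Fin 8))) := by
      simp only [IsInducedMatching, Set.subset_def, Finset.mem_coe]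
      decide
    exact hM.card_le_nuInd

end CycleEight

/-- For the disjoint union of `t` copies of `C₈`, the gap between the Ferrers
partition number and the induced matching number is exactly `t`. -/
theorem stmt12 (t : ℕ) : fp (Ft t) - nuInd (Ft t) = t := by
  have hFt : Ft t = disjointCopies (Fin t) (cycleGraph 8) := rfl
  rw [hFt, fp_disjointCopies, nuInd_disjointCopies, fp_cycleGraph_eight, nuInd_cycleGraph_eight,
    Fintype.card_fin]
  omega
end

section
/- For the crown graph H_n (n ≥ 3), obtained from K_{n,n} by deleting a perfect matching, fp(H_n) = 2, while the neighborhood-inclusion poset on each side is an antichain of size n, i.e., width(P_U) = width(P_V) = n. -/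
open SimpleGraph

/-- The crown graph `H_n`: `K_{n,n}` minus a perfect matching, with
`u_i ~ v_j` iff `i ≠ j`. -/
def crown (n : ℕ) : SimpleGraph (Fin n ⊕ Fin n) :=
  SimpleGraph.fromRel (fun x y =>
    ∃ i j : Fin n, i ≠ j ∧ x = Sum.inl i ∧ y = Sum.inr j)

section Aux

lemma crown_adj' (n : ℕ) (x y : Fin n ⊕ Fin n) :
    (crown n).Adj x y ↔
    ∃ i j : Fin n, i ≠ j ∧
      ((x = Sum.inl i ∧ y = Sum.inr j) ∨ (x = Sum.inr j ∧ y = Sum.inl i)) := by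
  rw [crown, SimpleGraph.fromRel_adj]
  constructor
  · rintro ⟨hne, ⟨i, j, hij, rfl, rfl⟩ | ⟨i, j, hij, rfl, rfl⟩⟩
    · exact ⟨i, j, hij, Or.inl ⟨rfl, rfl⟩⟩
    · exact ⟨i, j, hij, Or.inr ⟨rfl, rfl⟩⟩
  · rintro ⟨i, j, hij, ⟨rfl, rfl⟩ | ⟨rfl, rfl⟩⟩
    · exact ⟨by simp, Or.inl ⟨i, j, hij, rfl, rfl⟩⟩
    · exact ⟨by simp, Or.inr ⟨i, j, hij, rfl, rfl⟩⟩

lemma crown_adj_lr (n : ℕ) (i j : Fin n) :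
    (crown n).Adj (Sum.inl i) (Sum.inr j) ↔ i ≠ j := by
  rw [crown_adj']
  constructor
  · rintro ⟨a, b, hab, ⟨h1, h2⟩ | ⟨h1, h2⟩⟩
    · cases h1; cases h2; exact hab
    · cases h1
  · intro h; exact ⟨i, j, h, Or.inl ⟨rfl, rfl⟩⟩

lemma crown_not_adj_ll (n : ℕ) (i j : Fin n) :
    ¬ (crown n).Adj (Sum.inl i) (Sum.inl j) := by
  rw [crown_adj']
  rintro ⟨a, b, hab, ⟨h1, h2⟩ | ⟨h1, h2⟩⟩ <;> simp_all

lemma crown_not_adj_rr (n : ℕ) (i j : Fin n) :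
    ¬ (crown n).Adj (Sum.inr i) (Sum.inr j) := by
  rw [crown_adj']
  rintro ⟨a, b, hab, ⟨h1, h2⟩ | ⟨h1, h2⟩⟩ <;> simp_all

/-- the 2-coloring function on unordered pairs -/
def pv (n : ℕ) : Fin n ⊕ Fin n → Fin n ⊕ Fin n → Fin 2
  | Sum.inl i, Sum.inr j => if i < j then 0 else 1
  | Sum.inr j, Sum.inl i => if i < j then 0 else 1
  | _, _ => 0

lemma pv_symm (n : ℕ) (x y : Fin n ⊕ Fin n) : pv n x y = pv n y x := by
  rcases x with i | i <;> rcases y with j | j <;> rfl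

noncomputable def fcrown (n : ℕ) : (crown n).edgeSet → Fin 2 :=
  fun e => Sym2.lift ⟨pv n, pv_symm n⟩ e.1

lemma part_adj (n : ℕ) (k : Fin 2) (a b : Fin n ⊕ Fin n) :
    (SimpleGraph.fromEdgeSet
      {e | ∃ h : e ∈ (crown n).edgeSet, fcrown n ⟨e, h⟩ = k}).Adj a b ↔
    (crown n).Adj a b ∧ pv n a b = k := by
  rw [SimpleGraph.fromEdgeSet_adj]
  simp only [Set.mem_setOf_eq, SimpleGraph.mem_edgeSet]
  constructor
  · rintro ⟨⟨h, hk⟩, hne⟩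
    refine ⟨h, ?_⟩
    simpa [fcrown] using hk
  · rintro ⟨h, hk⟩
    exact ⟨⟨h, by simpa [fcrown] using hk⟩, h.ne⟩

/-- generic 2K₂-freeness for edge sets given by a "cross-comparable" relation -/
lemma no2K2_gen {n : ℕ} (G : SimpleGraph (Fin n ⊕ Fin n)) (r : Fin n → Fin n → Prop)
    (hadj : ∀ a b, G.Adj a b ↔ ∃ i j, r i j ∧
      ((a = Sum.inl i ∧ b = Sum.inr j) ∨ (a = Sum.inr j ∧ b = Sum.inl i)))
    (hcross : ∀ i₁ j₁ i₂ j₂, r i₁ j₁ → r i₂ j₂ → r i₁ j₂ ∨ r i₂ j₁) :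
    ¬ Has2K2 G := by
  rintro ⟨a, b, c, d, hab, hcd, _, _, _, _, nac, nad, nbc, nbd⟩
  obtain ⟨i₁, j₁, hr₁, hc₁⟩ := (hadj a b).mp hab
  obtain ⟨i₂, j₂, hr₂, hc₂⟩ := (hadj c d).mp hcd
  rcases hc₁ with ⟨rfl, rfl⟩ | ⟨rfl, rfl⟩ <;> rcases hc₂ with ⟨rfl, rfl⟩ | ⟨rfl, rfl⟩ <;>
    rcases hcross i₁ j₁ i₂ j₂ hr₁ hr₂ with h | h
  · exact nad ((hadj _ _).mpr ⟨i₁, j₂, h, Or.inl ⟨rfl, rfl⟩⟩)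
  · exact nbc ((hadj _ _).mpr ⟨i₂, j₁, h, Or.inr ⟨rfl, rfl⟩⟩)
  · exact nac ((hadj _ _).mpr ⟨i₁, j₂, h, Or.inl ⟨rfl, rfl⟩⟩)
  · exact nbd ((hadj _ _).mpr ⟨i₂, j₁, h, Or.inr ⟨rfl, rfl⟩⟩)
  · exact nbd ((hadj _ _).mpr ⟨i₁, j₂, h, Or.inl ⟨rfl, rfl⟩⟩)
  · exact nac ((hadj _ _).mpr ⟨i₂, j₁, h, Or.inr ⟨rfl, rfl⟩⟩)
  · exact nbc ((hadj _ _).mpr ⟨i₁, j₂, h, Or.inl ⟨rfl, rfl⟩⟩)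
  · exact nad ((hadj _ _).mpr ⟨i₂, j₁, h, Or.inr ⟨rfl, rfl⟩⟩)

lemma part0_adj (n : ℕ) (a b : Fin n ⊕ Fin n) :
    (crown n).Adj a b ∧ pv n a b = 0 ↔
    ∃ i j, i < j ∧
      ((a = Sum.inl i ∧ b = Sum.inr j) ∨ (a = Sum.inr j ∧ b = Sum.inl i)) := by
  constructor
  · rintro ⟨h, hpv⟩
    obtain ⟨i, j, hij, ⟨rfl, rfl⟩ | ⟨rfl, rfl⟩⟩ := (crown_adj' n _ _).mp h
    · refine ⟨i, j, ?_, Or.inl ⟨rfl, rfl⟩⟩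
      by_contra hlt
      simp [pv, hlt] at hpv
    · refine ⟨i, j, ?_, Or.inr ⟨rfl, rfl⟩⟩
      by_contra hlt
      simp [pv, hlt] at hpv
  · rintro ⟨i, j, hij, ⟨rfl, rfl⟩ | ⟨rfl, rfl⟩⟩
    · exact ⟨(crown_adj_lr n i j).mpr hij.ne, by simp [pv, hij]⟩
    · exact ⟨((crown_adj_lr n i j).mpr hij.ne).symm, by simp [pv, hij]⟩

lemma part1_adj (n : ℕ) (a b : Fin n ⊕ Fin n) :
    (crown n).Adj a b ∧ pv n a b = 1 ↔
    ∃ i j, j < i ∧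
      ((a = Sum.inl i ∧ b = Sum.inr j) ∨ (a = Sum.inr j ∧ b = Sum.inl i)) := by
  constructor
  · rintro ⟨h, hpv⟩
    obtain ⟨i, j, hij, ⟨rfl, rfl⟩ | ⟨rfl, rfl⟩⟩ := (crown_adj' n _ _).mp h
    · refine ⟨i, j, ?_, Or.inl ⟨rfl, rfl⟩⟩
      rcases lt_or_gt_of_ne hij with h' | h'
      · simp [pv, h'] at hpv
      · exact h'
    · refine ⟨i, j, ?_, Or.inr ⟨rfl, rfl⟩⟩
      rcases lt_or_gt_of_ne hij with h' | h'
      · simp [pv, h'] at hpv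
      · exact h'
  · rintro ⟨i, j, hij, ⟨rfl, rfl⟩ | ⟨rfl, rfl⟩⟩
    · exact ⟨(crown_adj_lr n i j).mpr hij.ne', by simp [pv, not_lt.mpr hij.le]⟩
    · exact ⟨((crown_adj_lr n i j).mpr hij.ne').symm, by simp [pv, not_lt.mpr hij.le]⟩

lemma crown_ferrers (n : ℕ) : IsFerrersPartition (crown n) 2 (fcrown n) := by
  intro k
  fin_cases k
  · apply no2K2_gen _ (fun i j => i < j)
    · intro a b
      rw [part_adj]
      exact part0_adj n a b
    · intro i₁ j₁ i₂ j₂ h1 h2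
      rcases lt_or_ge i₁ j₂ with h | h
      · exact Or.inl h
      · exact Or.inr (lt_of_lt_of_le h2 (le_trans h h1.le))
  · apply no2K2_gen _ (fun i j => j < i)
    · intro a b
      rw [part_adj]
      exact part1_adj n a b
    · intro i₁ j₁ i₂ j₂ h1 h2
      rcases lt_or_ge j₂ i₁ with h | h
      · exact Or.inl h
      · exact Or.inr (lt_of_lt_of_le h1 (le_trans h h2.le))

lemma crown_has2K2 (n : ℕ) (hn : 3 ≤ n) : Has2K2 (crown n) := by
  obtain ⟨m, rfl⟩ : ∃ m, n = m + 3 := ⟨n - 3, by omega⟩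
  refine ⟨Sum.inl 0, Sum.inr 1, Sum.inl 1, Sum.inr 0, ?_, ?_, ?_, ?_, ?_, ?_, ?_, ?_, ?_, ?_⟩
  · exact (crown_adj_lr _ _ _).mpr (by simp [Fin.ext_iff])
  · exact (crown_adj_lr _ _ _).mpr (by simp [Fin.ext_iff])
  · simp [Fin.ext_iff]
  · simp
  · simp
  · simp [Fin.ext_iff]
  · exact crown_not_adj_ll _ _ _
  · rw [crown_adj_lr]; simp
  · intro h; exact (crown_adj_lr _ 1 1).mp h.symm rfl
  · exact crown_not_adj_rr _ _ _

lemma fp_crown (n : ℕ) (hn : 3 ≤ n) : fp (crown n) = 2 := by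
  have h2 : 2 ∈ {k | ∃ f : (crown n).edgeSet → Fin k, IsFerrersPartition (crown n) k f} :=
    ⟨fcrown n, crown_ferrers n⟩
  have h0 : 0 ∉ {k | ∃ f : (crown n).edgeSet → Fin k, IsFerrersPartition (crown n) k f} := by
    rintro ⟨f, -⟩
    obtain ⟨m, rfl⟩ : ∃ m, n = m + 3 := ⟨n - 3, by omega⟩
    have hadj : (crown (m + 3)).Adj (Sum.inl 0) (Sum.inr 1) :=
      (crown_adj_lr _ _ _).mpr (by simp [Fin.ext_iff])
    exact (f ⟨s(Sum.inl 0, Sum.inr 1), hadj⟩).elim0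
  have h1 : 1 ∉ {k | ∃ f : (crown n).edgeSet → Fin k, IsFerrersPartition (crown n) k f} := by
    rintro ⟨f, hf⟩
    have := hf 0
    apply this
    have hset : {e | ∃ h : e ∈ (crown n).edgeSet, f ⟨e, h⟩ = 0} = (crown n).edgeSet := by
      ext e
      simp only [Set.mem_setOf_eq]
      exact ⟨fun ⟨h, _⟩ => h, fun h => ⟨h, Subsingleton.elim _ _⟩⟩
    rw [hset, SimpleGraph.fromEdgeSet_edgeSet]
    exact crown_has2K2 n hn
  have hmem := Nat.sInf_mem (⟨2, h2⟩ :
    Set.Nonempty {k | ∃ f : (crown n).edgeSet → Fin k, IsFerrersPartition (crown n) k f})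
  have hle := Nat.sInf_le h2
  unfold fp
  set S := {k | ∃ f : (crown n).edgeSet → Fin k, IsFerrersPartition (crown n) k f}
  rcases Nat.lt_or_ge (sInf S) 2 with h | h
  · interval_cases h' : sInf S
    · exact absurd hmem h0
    · exact absurd hmem h1
  · omega

end Aux

lemma widthU_crown (n : ℕ) (hn : 3 ≤ n) : widthU (crown n) = n := by
  unfold widthU
  have hmem : n ∈ {k | ∃ S : Finset (Fin n), S.card = k ∧ ∀ u ∈ S, ∀ u' ∈ S, u ≠ u' →
      ¬ {w : Fin n | (crown n).Adj (Sum.inl u) (Sum.inr w)} ⊆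
        {w : Fin n | (crown n).Adj (Sum.inl u') (Sum.inr w)} ∧
      ¬ {w : Fin n | (crown n).Adj (Sum.inl u') (Sum.inr w)} ⊆
        {w : Fin n | (crown n).Adj (Sum.inl u) (Sum.inr w)}} := by
    refine ⟨Finset.univ, by simp, ?_⟩
    intro u _ u' _ hne
    constructor
    · intro hsub
      have h2 := hsub ((crown_adj_lr n u u').mpr hne)
      exact ((crown_adj_lr n u' u').mp h2) rfl
    · intro hsub
      have h2 := hsub ((crown_adj_lr n u' u).mpr (Ne.symm hne))
      exact ((crown_adj_lr n u u).mp h2) rfl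
  have hbdd : ∀ k ∈ {k | ∃ S : Finset (Fin n), S.card = k ∧ ∀ u ∈ S, ∀ u' ∈ S, u ≠ u' →
      ¬ {w : Fin n | (crown n).Adj (Sum.inl u) (Sum.inr w)} ⊆
        {w : Fin n | (crown n).Adj (Sum.inl u') (Sum.inr w)} ∧
      ¬ {w : Fin n | (crown n).Adj (Sum.inl u') (Sum.inr w)} ⊆
        {w : Fin n | (crown n).Adj (Sum.inl u) (Sum.inr w)}}, k ≤ n := by
    rintro k ⟨S, rfl, -⟩
    simpa using S.card_le_univ
  exact le_antisymm (csSup_le ⟨n, hmem⟩ hbdd) (le_csSup ⟨n, hbdd⟩ hmem)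

lemma widthV_crown (n : ℕ) (hn : 3 ≤ n) : widthV (crown n) = n := by
  unfold widthV
  have hmem : n ∈ {k | ∃ S : Finset (Fin n), S.card = k ∧ ∀ v ∈ S, ∀ v' ∈ S, v ≠ v' →
      ¬ {w : Fin n | (crown n).Adj (Sum.inl w) (Sum.inr v)} ⊆
        {w : Fin n | (crown n).Adj (Sum.inl w) (Sum.inr v')} ∧
      ¬ {w : Fin n | (crown n).Adj (Sum.inl w) (Sum.inr v')} ⊆
        {w : Fin n | (crown n).Adj (Sum.inl w) (Sum.inr v)}} := by
    refine ⟨Finset.univ, by simp, ?_⟩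
    intro v _ v' _ hne
    constructor
    · intro hsub
      have h2 := hsub ((crown_adj_lr n v' v).mpr (Ne.symm hne))
      exact ((crown_adj_lr n v' v').mp h2) rfl
    · intro hsub
      have h2 := hsub ((crown_adj_lr n v v').mpr hne)
      exact ((crown_adj_lr n v v).mp h2) rfl
  have hbdd : ∀ k ∈ {k | ∃ S : Finset (Fin n), S.card = k ∧ ∀ v ∈ S, ∀ v' ∈ S, v ≠ v' →
      ¬ {w : Fin n | (crown n).Adj (Sum.inl w) (Sum.inr v)} ⊆
        {w : Fin n | (crown n).Adj (Sum.inl w) (Sum.inr v')} ∧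
      ¬ {w : Fin n | (crown n).Adj (Sum.inl w) (Sum.inr v')} ⊆
        {w : Fin n | (crown n).Adj (Sum.inl w) (Sum.inr v)}}, k ≤ n := by
    rintro k ⟨S, rfl, -⟩
    simpa using S.card_le_univ
  exact le_antisymm (csSup_le ⟨n, hmem⟩ hbdd) (le_csSup ⟨n, hbdd⟩ hmem)


/-- For the crown graph `H_n` (`n ≥ 3`), `fp (H_n) = 2` while both neighborhood
posets are antichains of size `n`. -/
theorem stmt13 (n : ℕ) (hn : 3 ≤ n) :
    fp (crown n) = 2 ∧ widthU (crown n) = n ∧ widthV (crown n) = n := by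
  exact ⟨fp_crown n hn, widthU_crown n hn, widthV_crown n hn⟩
end
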